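/- arXiv:2009.13713 — 2 statements merged into one kernel-verified Lean document; each statement's English description precedes it below -/
import Mathlib

section
/- Let (X, B, μ, f) be a measurable system satisfying Condition (SC), p ≥ 1, and W a generating wandering set for f. Let H₀ be the set of φ ∈ L^p(X) of the form φ = ∑_{i=1}^m a_i χ_{B_i} where the B_i are pairwise disjoint measurable sets, each B_i ⊆ f^{k_i}(W) for some k_i ∈ ℤ, and ∑_{n∈ℤ} μ(fⁿ(B_i)) < ∞ for each i. Then H₀ is dense in L^p(X). -/
open MeasureTheory Set Filter
open scoped ENNReal NNReal

/-- The image of a set under the `n`-th power (`n ∈ ℤ`) of a bijection `f`. -/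
def zimg {X : Type*} (f : X → X) (n : ℤ) (B : Set X) : Set X :=
  if 0 ≤ n then f^[n.toNat] '' B else f^[(-n).toNat] ⁻¹' B

/-- `W` is a wandering set for `f`: the sets `fⁿ(W)`, `n ∈ ℤ`, are pairwise disjoint. -/
def Wandering {X : Type*} (f : X → X) (W : Set X) : Prop :=
  Pairwise fun m n : ℤ => Disjoint (zimg f m W) (zimg f n W)

/-- `W` generates `X`: `X = ⋃_{n ∈ ℤ} fⁿ(W)`. -/
def GeneratedBy {X : Type*} (f : X → X) (W : Set X) : Prop :=
  (⋃ n : ℤ, zimg f n W) = Set.univ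

/-- The Summability Condition (SC). -/
def SCcond {X : Type*} [MeasurableSpace X] (μ : Measure X) (f : X → X) : Prop :=
  ∀ ε : ℝ≥0∞, 0 < ε → ∀ B : Set X, MeasurableSet B → μ B < ⊤ →
    ∃ B' : Set X, B' ⊆ B ∧ MeasurableSet B' ∧ μ (B \ B') < ε ∧
      ∑' n : ℤ, μ (zimg f n B') ≠ ⊤

/-- A measurable system: `μ` σ-finite with `μ(X) > 0`, `f` bijective, bimeasurable,
nonsingular, and `μ(f⁻¹(B)) ≤ c·μ(B)` with `0 < c < ∞`. -/
def MeasSystem {X : Type*} [MeasurableSpace X] (μ : Measure X) (f : X → X) (c : ℝ≥0∞) : Prop :=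
  SigmaFinite μ ∧ 0 < μ Set.univ ∧ Function.Bijective f ∧ Measurable f ∧
  (∀ B : Set X, MeasurableSet B → MeasurableSet (f '' B)) ∧
  (∀ B : Set X, MeasurableSet B → (μ (f ⁻¹' B) = 0 ↔ μ B = 0)) ∧
  0 < c ∧ c ≠ ⊤ ∧ (∀ B : Set X, MeasurableSet B → μ (f ⁻¹' B) ≤ c * μ B)

/-- `f` is dissipative: there is a generating wandering set. -/
def Dissipative {X : Type*} [MeasurableSpace X] (f : X → X) : Prop :=
  ∃ W : Set X, MeasurableSet W ∧ Wandering f W ∧ GeneratedBy f W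

/-- A set of natural numbers has positive lower density. -/
def PosLowerDensity (A : Set ℕ) : Prop :=
  0 < Filter.liminf (fun N : ℕ => ((A ∩ Set.Icc 1 N).ncard : ℝ) / N) Filter.atTop

/-- `x` is a recurrent point of `f`. -/
def Recurrent {X : Type*} [TopologicalSpace X] (f : X → X) (x : X) : Prop :=
  ∀ U : Set X, IsOpen U → x ∈ U → ∃ n : ℕ, 1 ≤ n ∧ f^[n] x ∈ U

/-- A continuous linear operator is frequently hypercyclic. -/
def FreqHC {E : Type*} [NormedAddCommGroup E] [NormedSpace ℝ E] (T : E →L[ℝ] E) : Prop :=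
  ∃ φ : E, ∀ U : Set E, IsOpen U → U.Nonempty → PosLowerDensity {n : ℕ | (T ^ n) φ ∈ U}

/-- `d(W) = ‖dμ/dν |_W‖_∞⁻¹`, with the convention `1/∞ = 0`. -/
noncomputable def dSeq {X : Type*} [MeasurableSpace X] (μ ν : Measure X) (W : Set X) : ℝ≥0∞ :=
  (essSup (μ.rnDeriv ν) (μ.restrict W))⁻¹

/-! The set `H₀` is an additive subgroup of `Lᵖ`: refining a finite family of admissible sets
into its atoms restores disjointness. Since simple functions are dense, it suffices that the
closure of `H₀` contains every `c χ_C` with `μ C < ∞`. Splitting `C` into the disjoint pieces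
`C ∩ fⁿ(W)` reduces this to a set `D` inside one level, and there Condition (SC) provides
admissible subsets `D' ⊆ D` with `μ (D \ D')` arbitrarily small. -/

open Topology

namespace MeasureTheory

variable {α E : Type*} [MeasurableSpace α] {μ : Measure α} [NormedAddCommGroup E] {p : ℝ≥0∞}

theorem indicatorConstLp_biUnion_finset {ι : Type*} {s : ι → Set α}
    (hs : ∀ i, MeasurableSet (s i)) (hμs : ∀ i, μ (s i) ≠ ∞)
    (hd : Pairwise fun i j => Disjoint (s i) (s j)) (F : Finset ι) (c : E) :
    indicatorConstLp p (F.measurableSet_biUnion fun i _ => hs i)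
        (measure_biUnion_lt_top F.finite_toSet fun i _ => (hμs i).lt_top).ne c =
      ∑ i ∈ F, indicatorConstLp p (hs i) (hμs i) c := by
  classical
  induction F using Finset.induction_on with
  | empty => simp
  | insert i F hi ih =>
    rw [Finset.sum_insert hi, ← ih, ← indicatorConstLp_disjoint_union]
    · congr 1
      simp
    · exact Set.disjoint_iUnion₂_right.2 fun j hj => hd (ne_of_mem_of_not_mem hj hi).symm

theorem tendsto_measure_iUnion_diff_biUnion_finset {ι : Type*} [Countable ι] {s : ι → Set α}
    (hs : ∀ i, MeasurableSet (s i)) (hd : Pairwise fun i j => Disjoint (s i) (s j))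
    (hμ : μ (⋃ i, s i) ≠ ∞) :
    Tendsto (fun F : Finset ι => μ ((⋃ i, s i) \ ⋃ i ∈ F, s i)) atTop (𝓝 0) := by
  have hsum : ∑' i, μ (s i) ≠ ∞ := by rwa [← measure_iUnion hd hs]
  refine tendsto_of_tendsto_of_tendsto_of_le_of_le tendsto_const_nhds
    (ENNReal.tendsto_tsum_compl_atTop_zero hsum) (fun _ => bot_le) fun F => ?_
  refine (measure_mono fun x hx => ?_).trans (measure_iUnion_le fun i : {i // i ∉ F} => s i)
  obtain ⟨hx, hF⟩ := hx
  obtain ⟨i, hi⟩ := mem_iUnion.1 hx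
  exact mem_iUnion.2 ⟨⟨i, fun hiF => hF (mem_biUnion hiF hi)⟩, hi⟩

theorem indicatorConstLp_mem_of_iUnion_eq [Fact (1 ≤ p)] (hp : p ≠ ∞)
    (K : AddSubgroup (Lp E p μ)) (hK : IsClosed (K : Set (Lp E p μ))) {ι : Type*} [Countable ι]
    {s : ι → Set α} (hs : ∀ i, MeasurableSet (s i))
    (hd : Pairwise fun i j => Disjoint (s i) (s j)) {t : Set α} (ht : MeasurableSet t)
    (hμt : μ t ≠ ∞) (hst : ⋃ i, s i = t) {c : E}
    (hsK : ∀ i (hμs : μ (s i) ≠ ∞), indicatorConstLp p (hs i) hμs c ∈ K) :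
    indicatorConstLp p ht hμt c ∈ K := by
  subst hst
  have hμs : ∀ i, μ (s i) ≠ ∞ := fun i =>
    ne_top_of_le_ne_top hμt (measure_mono (subset_iUnion s i))
  have hFs : ∀ F : Finset ι, (⋃ i ∈ F, s i) ⊆ ⋃ i, s i := fun F =>
    iUnion₂_subset fun i _ => subset_iUnion s i
  have hFm : ∀ F : Finset ι, MeasurableSet (⋃ i ∈ F, s i) := fun F =>
    F.measurableSet_biUnion fun i _ => hs i
  have hFμ : ∀ F : Finset ι, μ (⋃ i ∈ F, s i) ≠ ∞ := fun F =>
    ne_top_of_le_ne_top hμt (measure_mono (hFs F))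
  refine hK.mem_of_tendsto
    (tendsto_indicatorConstLp_set (l := atTop) (ht := hFm) (hμt := hFμ) hp ?_)
    (Eventually.of_forall fun F => ?_)
  · simpa only [symmDiff_of_le (hFs _)] using
      tendsto_measure_iUnion_diff_biUnion_finset hs hd hμt
  · rw [indicatorConstLp_biUnion_finset hs hμs hd F c]
    exact K.sum_mem fun i _ => hsK i (hμs i)

theorem Lp.dense_of_indicatorConstLp_mem_topologicalClosure [Fact (1 ≤ p)] (hp : p ≠ ∞)
    (S : AddSubgroup (Lp E p μ))
    (hS : ∀ (c : E) {s : Set α} (hs : MeasurableSet s) (hμs : μ s ≠ ∞),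
      indicatorConstLp p hs hμs c ∈ S.topologicalClosure) :
    Dense (S : Set (Lp E p μ)) := by
  suffices ∀ φ, φ ∈ S.topologicalClosure from this
  intro φ
  induction φ using Lp.induction hp with
  | indicatorConst c hs hμs => simpa [Lp.simpleFunc.coe_indicatorConst] using hS c hs hμs.ne
  | add _ _ _ hf hg => exact S.topologicalClosure.add_mem hf hg
  | isClosed => exact S.isClosed_topologicalClosure

end MeasureTheory

section Atoms

variable {α ι : Type*} (B : ι → Set α)

def atomOf (S : Finset ι) : Set α := {x | ∀ i, x ∈ B i ↔ i ∈ S}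

theorem pairwise_disjoint_atomOf : Pairwise fun S T => Disjoint (atomOf B S) (atomOf B T) :=
  fun _ _ hST => Set.disjoint_left.2 fun _ hS hT =>
    hST (Finset.ext fun i => (hS i).symm.trans (hT i))

variable {B}

theorem atomOf_subset {S : Finset ι} {i : ι} (hi : i ∈ S) : atomOf B S ⊆ B i :=
  fun _ hx => (hx i).2 hi

theorem measurableSet_atomOf [MeasurableSpace α] [Countable ι] (hB : ∀ i, MeasurableSet (B i))
    (S : Finset ι) : MeasurableSet (atomOf B S) := by
  classical
  have : atomOf B S = ⋂ i, if i ∈ S then B i else (B i)ᶜ := by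
    ext x
    simp only [atomOf, mem_ofPred_eq, mem_iInter]
    refine forall_congr' fun i => ?_
    split_ifs with hi <;> simp [hi]
  rw [this]
  exact MeasurableSet.iInter fun i => by split_ifs <;> simp [hB i]

theorem sum_mul_indicator_eq_sum_atomOf {R : Type*} [NonAssocSemiring R] [Fintype ι]
    (a : ι → R) (x : α) :
    ∑ i, a i * (B i).indicator (fun _ => (1 : R)) x =
      ∑ S : {S : Finset ι // S.Nonempty},
        (∑ i ∈ S.1, a i) * (atomOf B S).indicator (fun _ => (1 : R)) x := by
  classical
  set T := Finset.univ.filter fun i => x ∈ B i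
  have hmem : ∀ S, x ∈ atomOf B S ↔ S = T := fun S => by
    simp [atomOf, Finset.ext_iff, T, iff_comm]
  have hlhs : ∑ i, a i * (B i).indicator (fun _ => (1 : R)) x = ∑ i ∈ T, a i := by
    simp [Set.indicator_apply, T, Finset.sum_filter]
  rw [hlhs]
  by_cases hT : T.Nonempty
  · rw [eq_comm, Finset.sum_eq_single ⟨T, hT⟩]
    · simp [hmem]
    · intro S _ hS
      have : x ∉ atomOf B S := fun h => hS (Subtype.ext ((hmem S).1 h))
      simp [this]
    · simp
  · rw [Finset.not_nonempty_iff_eq_empty.1 hT, Finset.sum_empty]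
    refine (Finset.sum_eq_zero fun S _ => ?_).symm
    have : x ∉ atomOf B S := fun h => hT ((hmem S).1 h ▸ S.2)
    simp [this]

end Atoms

section LevelSimpleFunctions

theorem zimg_zero {X : Type*} (f : X → X) (B : Set X) : zimg f 0 B = B := by
  simp [zimg]

theorem zimg_mono {X : Type*} (f : X → X) (n : ℤ) {A B : Set X} (h : A ⊆ B) :
    zimg f n A ⊆ zimg f n B := by
  unfold zimg
  split_ifs
  · exact image_mono h
  · exact preimage_mono h

variable {X : Type*} [MeasurableSpace X] {μ : Measure X} {f : X → X} {W : Set X}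
  {p : ℝ≥0∞}

theorem measurableSet_zimg (hf : Measurable f)
    (hfB : ∀ B : Set X, MeasurableSet B → MeasurableSet (f '' B)) (n : ℤ) {B : Set X}
    (hB : MeasurableSet B) : MeasurableSet (zimg f n B) := by
  have himage : ∀ m : ℕ, MeasurableSet (f^[m] '' B) := fun m => by
    induction m with
    | zero => simpa using hB
    | succ m ih => simpa only [Function.iterate_succ', image_comp] using hfB _ ih
  unfold zimg
  split_ifs
  · exact himage _
  · exact hf.iterate _ hB

variable (μ f W) in
/-- The sets `Bᵢ` admitted in `H₀`. -/
def IsSummableLevelSet (B : Set X) : Prop :=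
  MeasurableSet B ∧ (∃ k : ℤ, B ⊆ zimg f k W) ∧ ∑' n : ℤ, μ (zimg f n B) ≠ ⊤

theorem IsSummableLevelSet.measure_ne_top {B : Set X} (hB : IsSummableLevelSet μ f W B) :
    μ B ≠ ∞ :=
  ne_top_of_le_ne_top hB.2.2 <|
    calc μ B = μ (zimg f 0 B) := by rw [zimg_zero]
      _ ≤ ∑' n : ℤ, μ (zimg f n B) := ENNReal.le_tsum 0

theorem IsSummableLevelSet.mono {A B : Set X} (hB : IsSummableLevelSet μ f W B)
    (hA : MeasurableSet A) (hAB : A ⊆ B) : IsSummableLevelSet μ f W A := by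
  obtain ⟨-, ⟨k, hk⟩, hsum⟩ := hB
  exact ⟨hA, ⟨k, hAB.trans hk⟩, ne_top_of_le_ne_top hsum
    (ENNReal.tsum_le_tsum fun n => measure_mono (zimg_mono f n hAB))⟩

variable (μ f W p) in
/-- The set `H₀`. -/
def levelSimpleFunctions : Set (Lp ℝ p μ) :=
  {φ : Lp ℝ p μ | ∃ (m : ℕ) (a : Fin m → ℝ) (Bs : Fin m → Set X) (k : Fin m → ℤ),
      (∀ i, MeasurableSet (Bs i)) ∧
      (Pairwise fun i j => Disjoint (Bs i) (Bs j)) ∧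
      (∀ i, Bs i ⊆ zimg f (k i) W) ∧
      (∀ i, (∑' n : ℤ, μ (zimg f n (Bs i))) ≠ ⊤) ∧
      (φ : X → ℝ) =ᵐ[μ] fun x => ∑ i, a i * (Bs i).indicator (fun _ => (1 : ℝ)) x}

/-- Disjointness can be dropped by passing to the atoms of the family. -/
theorem mem_levelSimpleFunctions_iff {φ : Lp ℝ p μ} :
    φ ∈ levelSimpleFunctions μ f W p ↔ ∃ (m : ℕ) (a : Fin m → ℝ) (B : Fin m → Set X),
      (∀ i, IsSummableLevelSet μ f W (B i)) ∧
      (φ : X → ℝ) =ᵐ[μ] fun x => ∑ i, a i * (B i).indicator (fun _ => (1 : ℝ)) x := by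
  constructor
  · rintro ⟨m, a, B, k, hBm, -, hBk, hBsum, hφ⟩
    exact ⟨m, a, B, fun i => ⟨hBm i, ⟨k i, hBk i⟩, hBsum i⟩, hφ⟩
  · rintro ⟨m, a, B, hB, hφ⟩
    let e := (Fintype.equivFin {S : Finset (Fin m) // S.Nonempty}).symm
    have hatom : ∀ S : {S : Finset (Fin m) // S.Nonempty},
        IsSummableLevelSet μ f W (atomOf B S) := fun S =>
      (hB _).mono (measurableSet_atomOf (fun i => (hB i).1) S) (atomOf_subset S.2.choose_spec)
    choose k hk using fun S => (hatom S).2.1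
    refine ⟨_, fun j => ∑ i ∈ (e j).1, a i, fun j => atomOf B (e j), fun j => k (e j),
      fun j => (hatom _).1, fun j j' hj => pairwise_disjoint_atomOf B fun h =>
        hj (e.injective (Subtype.ext h)), fun j => hk _, fun j => (hatom _).2.2, ?_⟩
    filter_upwards [hφ] with x hx
    rw [hx, sum_mul_indicator_eq_sum_atomOf, ← e.sum_comp]

variable (μ f W p) in
def levelSimpleSubgroup : AddSubgroup (Lp ℝ p μ) where
  carrier := levelSimpleFunctions μ f W p
  zero_mem' := mem_levelSimpleFunctions_iff.2 ⟨0, ![], ![], fun i => i.elim0, by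
    filter_upwards [Lp.coeFn_zero ℝ p μ] with x hx
    rw [hx]
    simp⟩
  add_mem' := by
    intro φ ψ hφ hψ
    obtain ⟨m, a, B, hB, hφ⟩ := mem_levelSimpleFunctions_iff.1 hφ
    obtain ⟨n, b, D, hD, hψ⟩ := mem_levelSimpleFunctions_iff.1 hψ
    refine mem_levelSimpleFunctions_iff.2 ⟨m + n, Fin.append a b, Fin.append B D,
      fun i => Fin.addCases (by simpa using hB ·) (by simpa using hD ·) i, ?_⟩
    filter_upwards [Lp.coeFn_add φ ψ, hφ, hψ] with x hx hφx hψx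
    rw [hx, Pi.add_apply, hφx, hψx]
    simp [Fin.sum_univ_add]
  neg_mem' := by
    intro φ hφ
    obtain ⟨m, a, B, hB, hφ⟩ := mem_levelSimpleFunctions_iff.1 hφ
    refine mem_levelSimpleFunctions_iff.2 ⟨m, -a, B, hB, ?_⟩
    filter_upwards [Lp.coeFn_neg φ, hφ] with x hx hφx
    rw [hx, Pi.neg_apply, hφx]
    simp [Finset.sum_neg_distrib]

theorem indicatorConstLp_mem_levelSimpleFunctions {B : Set X}
    (hB : IsSummableLevelSet μ f W B) (c : ℝ) :
    indicatorConstLp p hB.1 hB.measure_ne_top c ∈ levelSimpleFunctions μ f W p := by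
  refine mem_levelSimpleFunctions_iff.2
    ⟨1, ![c], ![B], fun i => by simpa [Fin.fin_one_eq_zero i] using hB, ?_⟩
  filter_upwards [indicatorConstLp_coeFn (p := p) (μ := μ) (hs := hB.1)
    (hμs := hB.measure_ne_top) (c := c)] with x hx
  by_cases hxB : x ∈ B <;> simp [hx, hxB]

theorem indicatorConstLp_mem_closure_levelSimpleFunctions [Fact (1 ≤ p)] (hp : p ≠ ∞)
    (hSC : SCcond μ f) {D : Set X} (hD : MeasurableSet D) (hμD : μ D ≠ ∞) {k : ℤ}
    (hDk : D ⊆ zimg f k W) (c : ℝ) :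
    indicatorConstLp p hD hμD c ∈ closure (levelSimpleFunctions μ f W p) := by
  choose B hBD hBm hBsmall hBsum using fun n : ℕ =>
    hSC _ (ENNReal.inv_pos.2 (ENNReal.natCast_ne_top n)) D hD hμD.lt_top
  have hB : ∀ n, IsSummableLevelSet μ f W (B n) := fun n =>
    ⟨hBm n, ⟨k, (hBD n).trans hDk⟩, hBsum n⟩
  refine mem_closure_of_tendsto (tendsto_indicatorConstLp_set (l := atTop) (ht := hBm)
      (hμt := fun n => (hB n).measure_ne_top) hp ?_)
    (Eventually.of_forall fun n => indicatorConstLp_mem_levelSimpleFunctions (hB n) c)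
  simp only [symmDiff_of_le (hBD _)]
  exact tendsto_of_tendsto_of_tendsto_of_le_of_le tendsto_const_nhds
    ENNReal.tendsto_inv_nat_nhds_zero (fun _ => bot_le) fun n => (hBsmall n).le

end LevelSimpleFunctions

/-- In a measurable system satisfying Condition (SC) with generating
wandering set `W`, the set `H₀` of `L^p` functions of the form `∑ aᵢ χ_{Bᵢ}` with the
`Bᵢ` pairwise disjoint, each contained in some level `f^{kᵢ}(W)` and with
`∑_{n∈ℤ} μ(fⁿ(Bᵢ)) < ∞`, is dense in `L^p(X)`. -/
theorem stmt_15 {X : Type*} [MeasurableSpace X] (μ : Measure X) (f : X → X) (c : ℝ≥0∞)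
    (hsys : MeasSystem μ f c) (hSC : SCcond μ f)
    (p : ℝ≥0∞) [Fact (1 ≤ p)] (hp : p ≠ ⊤)
    (W : Set X) (hWm : MeasurableSet W) (hWw : Wandering f W) (hWg : GeneratedBy f W) :
    Dense {φ : Lp ℝ p μ | ∃ (m : ℕ) (a : Fin m → ℝ) (Bs : Fin m → Set X) (k : Fin m → ℤ),
      (∀ i, MeasurableSet (Bs i)) ∧
      (Pairwise fun i j => Disjoint (Bs i) (Bs j)) ∧
      (∀ i, Bs i ⊆ zimg f (k i) W) ∧
      (∀ i, (∑' n : ℤ, μ (zimg f n (Bs i))) ≠ ⊤) ∧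
      (φ : X → ℝ) =ᵐ[μ] fun x => ∑ i, a i * (Bs i).indicator (fun _ => (1 : ℝ)) x} := by
  obtain ⟨-, -, -, hf, hfB, -⟩ := hsys
  refine Lp.dense_of_indicatorConstLp_mem_topologicalClosure hp (levelSimpleSubgroup μ f W p)
    fun a C hC hμC => ?_
  have hlevel : ∀ n, MeasurableSet (zimg f n W) := fun n => measurableSet_zimg hf hfB n hWm
  refine indicatorConstLp_mem_of_iUnion_eq hp _ (AddSubgroup.isClosed_topologicalClosure _)
    (s := fun n : ℤ => C ∩ zimg f n W) (fun n => hC.inter (hlevel n))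
    (fun m n hmn => (hWw hmn).mono inter_subset_right inter_subset_right) hC hμC
    (by rw [← inter_iUnion, hWg, inter_univ]) fun n hμn =>
      indicatorConstLp_mem_closure_levelSimpleFunctions hp hSC _ hμn inter_subset_right a
end

section
/- Let (X, B, μ, f) be a dissipative measurable system, p ≥ 1, and suppose the composition operator T_f on L^p(X) has a dense set of periodic points. Then for every measurable B with μ(B) < ∞ and every ε > 0, there exists measurable B' ⊆ B and N ∈ ℕ, N ≥ 1, such that μ(B ∖ B') < ε, the sets f^{kN}(B'), k ∈ ℤ, are pairwise disjoint, and ∑_{k∈ℤ} μ(f^{kN}(B')) < ∞; consequently ∑_{n∈ℤ} μ(fⁿ(B')) < ∞, i.e., f satisfies Condition (SC). -/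
open MeasureTheory Set Filter
open scoped ENNReal NNReal

/-! Approximate `1_B` in `L^p` by a periodic point `φ` of `T_f`, so that `φ ∘ f^{N₀} = φ` a.e.
The set `E = {φ > 1/2}` has finite measure, is a.e. invariant under `f^{N₀}`, and contains
most of `B`. Cut `B ∩ E` down to a set `B'` meeting only finitely many levels `fⁿ(W)`, `n ∈ s`,
of a generating wandering set `W`, and let `N` be a multiple of `N₀` exceeding the spread of
`s`. Then the translates `f^{kN}(B')` lie in pairwise distinct levels, hence are disjoint, and
they lie a.e. in `E`, so their measures sum to at most `μ(E)`. Finally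
`μ(f⁻¹ A) ≤ c μ(A)` bounds each `μ(fⁿ(B'))` by `max(1, c)^N μ(f^{kN}(B'))` for the first
multiple `kN ≥ n`. -/

open Function

section Translates

variable {X : Type*} {f : X → X}

theorem zimg_eq_image_zpow (hf : Bijective f) (n : ℤ) (B : Set X) :
    zimg f n B = ⇑(Equiv.ofBijective f hf ^ n) '' B := by
  cases n with
  | ofNat k =>
    simp only [zimg, Int.ofNat_eq_natCast, Nat.cast_nonneg, if_true, Int.toNat_natCast,
      zpow_natCast, Equiv.Perm.coe_pow]
    rfl
  | negSucc k =>
    simp only [zimg, Int.negSucc_not_nonneg, if_false, zpow_negSucc, Equiv.Perm.coe_inv,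
      Equiv.image_symm_eq_preimage, Equiv.Perm.coe_pow]
    rfl

theorem zimg_eq_preimage_zpow_neg (hf : Bijective f) (n : ℤ) (B : Set X) :
    zimg f n B = ⇑(Equiv.ofBijective f hf ^ (-n)) ⁻¹' B := by
  rw [zimg_eq_image_zpow hf, zpow_neg, Equiv.Perm.coe_inv, Equiv.image_eq_preimage_symm]

theorem zimg_add (hf : Bijective f) (m n : ℤ) (B : Set X) :
    zimg f (m + n) B = zimg f m (zimg f n B) := by
  simp only [zimg_eq_image_zpow hf, zpow_add, Equiv.Perm.coe_mul, image_comp]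

theorem zimg_sub_one (hf : Bijective f) (n : ℤ) (B : Set X) :
    zimg f (n - 1) B = f ⁻¹' zimg f n B := by
  rw [sub_eq_neg_add, zimg_add hf]
  simp [zimg]

theorem MeasurableSet.zimg [MeasurableSpace X] (hf : Measurable f)
    (himg : ∀ B : Set X, MeasurableSet B → MeasurableSet (f '' B)) (n : ℤ) {B : Set X}
    (hB : MeasurableSet B) : MeasurableSet (zimg f n B) := by
  unfold _root_.zimg
  split
  · induction n.toNat with
    | zero => simpa using hB
    | succ k ih => rw [iterate_succ', image_comp]; exact himg _ ih
  · exact hf.iterate _ hB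

theorem pairwise_disjoint_zimg_mul (hf : Bijective f) {W : Set X} (hW : Wandering f W)
    {s : Finset ℤ} {A : Set X} (hA : A ⊆ ⋃ n ∈ s, zimg f n W) {N : ℤ}
    (hN : ∀ n ∈ s, ∀ n' ∈ s, n - n' < N) :
    Pairwise fun k l : ℤ => Disjoint (zimg f (k * N) A) (zimg f (l * N) A) := by
  have hlevel : ∀ m x, x ∈ zimg f m A → ∃ n ∈ s, x ∈ zimg f (m + n) W := by
    intro m x hx
    rw [zimg_eq_image_zpow hf] at hx
    obtain ⟨y, hy, rfl⟩ := hx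
    obtain ⟨n, hn, hyn⟩ := mem_iUnion₂.mp (hA hy)
    exact ⟨n, hn, by rw [zimg_add hf, zimg_eq_image_zpow hf m]; exact mem_image_of_mem _ hyn⟩
  intro k l hkl
  refine disjoint_left.mpr fun x hxk hxl => ?_
  obtain ⟨n, hn, hx⟩ := hlevel _ _ hxk
  obtain ⟨n', hn', hx'⟩ := hlevel _ _ hxl
  have heq : k * N + n = l * N + n' := by
    by_contra hne
    exact disjoint_left.mp (hW hne) hx hx'
  -- `(k - l) * N = n' - n`, and `|n' - n| < N` forces `k = l`
  have h₁ := hN n hn n' hn'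
  have h₂ := hN n' hn' n hn
  rcases lt_or_gt_of_ne hkl with h | h <;> nlinarith

end Translates

section Measure

variable {X : Type*} [MeasurableSpace X] {μ : Measure X}

theorem MeasureTheory.Measure.QuasiMeasurePreserving.zpow {g : Equiv.Perm X}
    (hg : Measure.QuasiMeasurePreserving g μ μ)
    (hg' : Measure.QuasiMeasurePreserving g.symm μ μ) (m : ℤ) :
    Measure.QuasiMeasurePreserving ⇑(g ^ m) μ μ := by
  induction m using Int.induction_on with
  | zero => exact Measure.QuasiMeasurePreserving.id μ
  | succ i ih => rw [zpow_add_one, Equiv.Perm.coe_mul]; exact ih.comp hg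
  | pred i ih => rw [zpow_sub_one, Equiv.Perm.coe_mul, Equiv.Perm.coe_inv]; exact ih.comp hg'

theorem preimage_zpow_ae_eq_of_dvd {g : Equiv.Perm X}
    (hq : ∀ m : ℤ, Measure.QuasiMeasurePreserving ⇑(g ^ m) μ μ) {E : Set X} {N m : ℤ}
    (hE : ⇑(g ^ N) ⁻¹' E =ᵐ[μ] E) (hm : N ∣ m) : ⇑(g ^ m) ⁻¹' E =ᵐ[μ] E := by
  obtain ⟨k, rfl⟩ := hm
  induction k using Int.induction_on with
  | zero => simp only [mul_zero, zpow_zero, Equiv.Perm.coe_one, preimage_id]; rfl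
  | succ i ih =>
    rw [mul_add_one, zpow_add, Equiv.Perm.coe_mul, preimage_comp]
    exact ((hq N).preimage_ae_eq ih).trans hE
  | pred i ih =>
    have hE' := (hq (-N)).preimage_ae_eq hE
    rw [← preimage_comp, ← Equiv.Perm.coe_mul, ← zpow_add, add_neg_cancel, zpow_zero,
      Equiv.Perm.coe_one, preimage_id] at hE'
    rw [mul_sub_one, sub_eq_add_neg, zpow_add, Equiv.Perm.coe_mul, preimage_comp]
    exact ((hq (-N)).preimage_ae_eq ih).trans hE'.symm

theorem tsum_measure_le_of_ae_subset {ι : Type*} [Countable ι] {A : ι → Set X} {E : Set X}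
    (hA : ∀ i, MeasurableSet (A i)) (hd : Pairwise (Disjoint on A))
    (hAE : ∀ i, A i ≤ᵐ[μ] E) : ∑' i, μ (A i) ≤ μ E :=
  calc ∑' i, μ (A i) ≤ μ (⋃ i, A i) := tsum_meas_le_meas_iUnion_of_disjoint μ hA hd
    _ ≤ μ E := measure_mono_ae <| ae_le_set.mpr <| by
      rw [iUnion_sdiff]; exact measure_iUnion_null fun i => ae_le_set.mp (hAE i)

theorem exists_finset_measure_diff_biUnion_lt {ι : Type*} [Countable ι] {L : ι → Set X}
    (hL : Pairwise (Disjoint on L)) (hLm : ∀ i, MeasurableSet (L i)) (hcover : ⋃ i, L i = univ)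
    {B : Set X} (hB : MeasurableSet B) (hBfin : μ B ≠ ⊤) {ε : ℝ≥0∞} (hε : 0 < ε) :
    ∃ s : Finset ι, μ (B \ ⋃ i ∈ s, L i) < ε := by
  have hsum : ∑' i, μ (B ∩ L i) ≠ ⊤ := by
    rwa [← measure_iUnion (fun i j h => (hL h).mono inter_subset_right inter_subset_right)
      fun i => hB.inter (hLm i), ← inter_iUnion, hcover, inter_univ]
  obtain ⟨s, hs⟩ := ((ENNReal.tendsto_tsum_compl_atTop_zero hsum).eventually_lt_const hε).exists
  refine ⟨s, lt_of_le_of_lt ((measure_mono ?_).trans (measure_iUnion_le _)) hs⟩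
  intro x ⟨hxB, hxs⟩
  obtain ⟨i, hi⟩ := mem_iUnion.mp (hcover.symm ▸ mem_univ x : x ∈ ⋃ i, L i)
  exact mem_iUnion.mpr ⟨⟨i, fun his => hxs (mem_biUnion his hi)⟩, hxB, hi⟩

theorem Dense.exists_measure_le_dist_lt {E : Type*} [NormedAddCommGroup E] {p : ℝ≥0∞}
    [Fact (1 ≤ p)] {S : Set (Lp E p μ)} (hS : Dense S) (ψ : Lp E p μ) {δ : ℝ} (hδ : 0 < δ)
    {η : ℝ≥0∞} (hη : 0 < η) : ∃ φ ∈ S, μ {x | δ ≤ dist (φ x) (ψ x)} < η := by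
  have := mem_closure_iff_nhdsWithin_neBot.mp (hS ψ)
  have hconv := tendstoInMeasure_of_tendsto_Lp (μ := μ)
    (tendsto_id.mono_left (nhdsWithin_le_nhds (s := S) (a := ψ)))
  refine (eventually_mem_nhdsWithin.and ((hconv _ (ENNReal.ofReal_pos.mpr hδ)).eventually_lt_const
    hη)).exists.imp fun φ hφ => ⟨hφ.1, ?_⟩
  simpa only [id, edist_dist, ENNReal.ofReal_le_ofReal_iff dist_nonneg] using hφ.2

end Measure

theorem Finset.exists_dvd_forall_sub_lt (s : Finset ℤ) {N₀ : ℕ} (hN₀ : 0 < N₀) :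
    ∃ N : ℕ, 0 < N ∧ N₀ ∣ N ∧ ∀ n ∈ s, ∀ n' ∈ s, n - n' < N := by
  refine ⟨N₀ * (2 * s.sup Int.natAbs + 1), by positivity, dvd_mul_right _ _, fun n hn n' hn' => ?_⟩
  have := Finset.le_sup (f := Int.natAbs) hn
  have := Finset.le_sup (f := Int.natAbs) hn'
  have := Nat.le_mul_of_pos_left (2 * s.sup Int.natAbs + 1) hN₀
  omega

theorem ENNReal.tsum_le_mul_tsum_mul_of_le_mul {a : ℤ → ℝ≥0∞} {c : ℝ≥0∞}
    (ha : ∀ n, a (n - 1) ≤ c * a n) (N : ℕ) [NeZero N] :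
    ∑' n, a n ≤ N * (max 1 c ^ N * ∑' k : ℤ, a (k * N)) := by
  have hiter : ∀ m (r : ℕ), a (m - r) ≤ c ^ r * a m := by
    intro m r
    induction r with
    | zero => simp
    | succ r ih =>
      calc a (m - (r + 1 : ℕ)) = a (m - r - 1) := by push_cast; ring_nf
        _ ≤ c * (c ^ r * a m) := (ha _).trans (mul_le_mul_right ih c)
        _ = c ^ (r + 1) * a m := by ring
  have hblock : ∀ k : ℤ, ∀ r : Fin N, a (k * N + r) ≤ max 1 c ^ N * a ((k + 1) * N) := by
    intro k r
    calc a (k * N + r) = a ((k + 1) * N - (N - r : ℕ)) := by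
          rw [Nat.cast_sub r.2.le]; ring_nf
      _ ≤ c ^ (N - r : ℕ) * a ((k + 1) * N) := hiter _ _
      _ ≤ max 1 c ^ N * a ((k + 1) * N) := by
          refine mul_le_mul_left ?_ _
          calc c ^ (N - r : ℕ) ≤ max 1 c ^ (N - r : ℕ) := by gcongr; exact le_max_right 1 c
            _ ≤ max 1 c ^ N := pow_le_pow_right₀ (le_max_left 1 c) (Nat.sub_le _ _)
  calc ∑' n, a n = ∑' q : ℤ × Fin N, a (q.1 * N + q.2) := by
        rw [← (Int.divModEquiv N).symm.tsum_eq]; simp only [Int.divModEquiv_symm_apply]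
    _ = ∑' (k : ℤ) (r : Fin N), a (k * N + r) :=
        ENNReal.tsum_prod (f := fun (k : ℤ) (r : Fin N) => a (k * N + r))
    _ ≤ ∑' (k : ℤ) (_ : Fin N), max 1 c ^ N * a ((k + 1) * N) :=
        ENNReal.tsum_le_tsum fun k => ENNReal.tsum_le_tsum (hblock k)
    _ = N * (max 1 c ^ N * ∑' k : ℤ, a ((k + 1) * N)) := by
        simp only [tsum_fintype, Finset.sum_const, Finset.card_univ, Fintype.card_fin,
          nsmul_eq_mul, ENNReal.tsum_mul_left]
    _ = N * (max 1 c ^ N * ∑' k : ℤ, a (k * N)) := by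
        congr 2
        exact (Equiv.addRight (1 : ℤ)).tsum_eq (fun k : ℤ => a (k * N))

theorem MeasureTheory.Lp.coeFn_pow_apply_ae_eq_comp_iterate {X E : Type*} [MeasurableSpace X]
    {μ : Measure X} [NormedAddCommGroup E] [NormedSpace ℝ E] {p : ℝ≥0∞} [Fact (1 ≤ p)] {f : X → X}
    (hf : Measure.QuasiMeasurePreserving f μ μ) {T : Lp E p μ →L[ℝ] Lp E p μ}
    (hT : ∀ φ : Lp E p μ, (T φ : X → E) =ᵐ[μ] φ ∘ f) (n : ℕ) (φ : Lp E p μ) :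
    ((T ^ n) φ : X → E) =ᵐ[μ] φ ∘ f^[n] := by
  induction n generalizing φ with
  | zero => rfl
  | succ n ih =>
    rw [pow_succ, iterate_succ']
    exact (ih (T φ)).trans ((hf.iterate n).ae_eq (hT φ))

section Construction

variable {X : Type*} [MeasurableSpace X] {μ : Measure X} {f : X → X}

theorem quasiMeasurePreserving_ofBijective_zpow (hf : Bijective f) (hmf : Measurable f)
    (himg : ∀ B : Set X, MeasurableSet B → MeasurableSet (f '' B))
    (hns : ∀ B : Set X, MeasurableSet B → (μ (f ⁻¹' B) = 0 ↔ μ B = 0)) (m : ℤ) :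
    Measure.QuasiMeasurePreserving ⇑(Equiv.ofBijective f hf ^ m) μ μ := by
  set g := Equiv.ofBijective f hf
  have hg_symm : Measurable g.symm := fun t ht => by
    rw [← Equiv.image_eq_preimage_symm]; exact himg t ht
  have hg : Measure.QuasiMeasurePreserving f μ μ :=
    ⟨hmf, .mk fun s hs h0 => by rw [Measure.map_apply hmf hs]; exact (hns s hs).2 h0⟩
  refine Measure.QuasiMeasurePreserving.zpow hg ⟨hg_symm, .mk fun s hs h0 => ?_⟩ m
  rw [Measure.map_apply hg_symm hs, ← Equiv.image_eq_preimage_symm]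
  refine (hns _ (himg s hs)).1 ?_
  rwa [preimage_image_eq s hf.injective]

theorem preimage_iterate_preimage_ae_eq_of_pow_apply_eq {E : Type*} [NormedAddCommGroup E]
    [NormedSpace ℝ E] {p : ℝ≥0∞} [Fact (1 ≤ p)] (hf : Measure.QuasiMeasurePreserving f μ μ)
    {T : Lp E p μ →L[ℝ] Lp E p μ} (hT : ∀ φ : Lp E p μ, (T φ : X → E) =ᵐ[μ] φ ∘ f)
    {N : ℕ} {φ : Lp E p μ} (hper : (T ^ N) φ = φ) (S : Set E) :
    f^[N] ⁻¹' (φ ⁻¹' S) =ᵐ[μ] (φ : X → E) ⁻¹' S := by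
  have h := Lp.coeFn_pow_apply_ae_eq_comp_iterate hf hT N φ
  rw [hper] at h
  exact (h.fun_comp (· ∈ S)).symm

theorem tsum_measure_zimg_mul_le (hf : Bijective f)
    (hq : ∀ m : ℤ, Measure.QuasiMeasurePreserving ⇑(Equiv.ofBijective f hf ^ m) μ μ)
    {A E : Set X} (hAE : A ⊆ E) {N₀ N : ℤ} (hE : ⇑(Equiv.ofBijective f hf ^ N₀) ⁻¹' E =ᵐ[μ] E)
    (hdvd : N₀ ∣ N) (hAm : ∀ k : ℤ, MeasurableSet (zimg f (k * N) A))
    (hdisj : Pairwise fun k l : ℤ => Disjoint (zimg f (k * N) A) (zimg f (l * N) A)) :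
    ∑' k : ℤ, μ (zimg f (k * N) A) ≤ μ E := by
  refine tsum_measure_le_of_ae_subset hAm hdisj fun k => ?_
  have hsub : zimg f (k * N) A ⊆ zimg f (k * N) E := by
    simp only [zimg_eq_image_zpow hf]; exact image_mono hAE
  refine hsub.eventuallyLE.trans ?_
  rw [zimg_eq_preimage_zpow_neg hf]
  exact (preimage_zpow_ae_eq_of_dvd hq hE (dvd_neg.mpr (dvd_mul_of_dvd_right hdvd k))).le

theorem measure_diff_setOf_lt_le {B : Set X} {φ χ : X → ℝ} (hχ : χ =ᵐ[μ] B.indicator 1)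
    (t : ℝ) : μ (B \ {x | t < φ x}) ≤ μ {x | 1 - t ≤ dist (φ x) (χ x)} := by
  refine measure_mono_ae ?_
  filter_upwards [hχ] with x hx ⟨hxB, hxt⟩
  change ¬t < φ x at hxt
  change 1 - t ≤ dist (φ x) (χ x)
  rw [hx, indicator_of_mem hxB, Pi.one_apply, Real.dist_eq, abs_sub_comm]
  linarith [not_lt.mp hxt, le_abs_self (1 - φ x)]

theorem MeasureTheory.MemLp.measure_setOf_lt_lt_top {p : ℝ≥0∞} {φ : X → ℝ} (hφ : MemLp φ p μ)
    (hp0 : p ≠ 0) (hp : p ≠ ⊤) {t : ℝ} (ht : 0 < t) : μ {x | t < φ x} < ⊤ := by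
  refine (measure_mono fun x hx => ?_).trans_lt
    (hφ.meas_ge_lt_top hp0 hp (ε := t.toNNReal) (by simpa using ht))
  rw [mem_ofPred_eq, Real.toNNReal_le_iff_le_coe, coe_nnnorm, Real.norm_eq_abs]
  exact (le_of_lt hx).trans (le_abs_self _)

end Construction

theorem MeasSystem.exists_subset_zimg_mul_pairwise_disjoint {X : Type*} [MeasurableSpace X]
    {μ : Measure X} {f : X → X} {c : ℝ≥0∞} (hsys : MeasSystem μ f c) (hdiss : Dissipative f)
    {p : ℝ≥0∞} [Fact (1 ≤ p)] (hp : p ≠ ⊤) {T : Lp ℝ p μ →L[ℝ] Lp ℝ p μ}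
    (hT : ∀ φ : Lp ℝ p μ, (T φ : X → ℝ) =ᵐ[μ] fun x => (φ : X → ℝ) (f x))
    (hdense : Dense {φ : Lp ℝ p μ | ∃ N : ℕ, 1 ≤ N ∧ (T ^ N) φ = φ})
    {B : Set X} (hB : MeasurableSet B) (hBfin : μ B ≠ ⊤) {ε : ℝ≥0∞} (hε : 0 < ε) :
    ∃ (B' : Set X) (N : ℕ), B' ⊆ B ∧ MeasurableSet B' ∧ 1 ≤ N ∧ μ (B \ B') < ε ∧
      (Pairwise fun k l : ℤ => Disjoint (zimg f (k * (N : ℤ)) B') (zimg f (l * (N : ℤ)) B')) ∧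
      (∑' k : ℤ, μ (zimg f (k * (N : ℤ)) B')) ≠ ⊤ ∧ (∑' n : ℤ, μ (zimg f n B')) ≠ ⊤ := by
  obtain ⟨-, -, hbij, hmf, himg, hns, -, hc, hbd⟩ := hsys
  obtain ⟨W, hWm, hWw, hWg⟩ := hdiss
  have hq := quasiMeasurePreserving_ofBijective_zpow (μ := μ) hbij hmf himg hns
  have hε2 : 0 < ε / 2 := ENNReal.half_pos hε.ne'
  obtain ⟨φ, ⟨N₀, hN₀, hper⟩, hφ⟩ := hdense.exists_measure_le_dist_lt
    (indicatorConstLp p hB hBfin (1 : ℝ)) (by norm_num : (0 : ℝ) < 1 / 2) hε2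
  obtain ⟨s, hs⟩ := exists_finset_measure_diff_biUnion_lt hWw (fun n => hWm.zimg hmf himg n)
    hWg hB hBfin hε2
  set E := {x | 1 / 2 < φ x}
  have hE : MeasurableSet E :=
    measurableSet_lt measurable_const (Lp.stronglyMeasurable φ).measurable
  set B' := B ∩ (⋃ n ∈ s, zimg f n W) ∩ E
  have hB'm : MeasurableSet B' :=
    (hB.inter (s.measurableSet_biUnion fun n _ => hWm.zimg hmf himg n)).inter hE
  obtain ⟨N, hNpos, hdvd, hN⟩ := s.exists_dvd_forall_sub_lt hN₀
  have hdisj := pairwise_disjoint_zimg_mul hbij hWw (A := B')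
    (inter_subset_left.trans inter_subset_right) hN
  have hEinv : ⇑(Equiv.ofBijective f hbij ^ (N₀ : ℤ)) ⁻¹' E =ᵐ[μ] E := by
    rw [zpow_natCast, Equiv.Perm.coe_pow]
    exact preimage_iterate_preimage_ae_eq_of_pow_apply_eq (by simpa using hq 1) hT hper (Ioi (1 / 2))
  have hsumN : ∑' k : ℤ, μ (zimg f (k * (N : ℤ)) B') ≠ ⊤ :=
    ((tsum_measure_zimg_mul_le hbij hq inter_subset_right hEinv (Int.natCast_dvd_natCast.mpr hdvd)
      (fun k => hB'm.zimg hmf himg _) hdisj).trans_lt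
      ((Lp.memLp φ).measure_setOf_lt_lt_top (zero_lt_one.trans_le Fact.out).ne' hp
        (by norm_num))).ne
  have hdiff : μ (B \ B') < ε := by
    calc μ (B \ B') ≤ μ (B \ ⋃ n ∈ s, zimg f n W) + μ (B \ E) := by
          rw [sdiff_inter, sdiff_self_inter]
          exact measure_union_le _ _
      _ < ε / 2 + ε / 2 := ENNReal.add_lt_add hs ((measure_diff_setOf_lt_le
          indicatorConstLp_coeFn _).trans_lt (by rwa [show (1 : ℝ) - 1 / 2 = 1 / 2 by norm_num]))
      _ = ε := ENNReal.add_halves ε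
  have : NeZero N := ⟨hNpos.ne'⟩
  have hstep : ∀ n : ℤ, μ (zimg f (n - 1) B') ≤ c * μ (zimg f n B') := fun n => by
    rw [zimg_sub_one hbij]; exact hbd _ (hB'm.zimg hmf himg n)
  have hsum : ∑' n : ℤ, μ (zimg f n B') ≠ ⊤ :=
    ne_top_of_le_ne_top (by finiteness) (ENNReal.tsum_le_mul_tsum_mul_of_le_mul hstep N)
  exact ⟨B', N, inter_subset_left.trans inter_subset_left, hB'm, hNpos, hdiff, hdisj, hsumN, hsum⟩

/-- In a dissipative measurable system whose composition operator `T_f` on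
`L^p(X)` has a dense set of periodic points, for every measurable `B` of finite measure
and every `ε > 0` there are `B' ⊆ B` measurable and `N ≥ 1` with `μ(B∖B') < ε`, the sets
`f^{kN}(B')`, `k ∈ ℤ`, pairwise disjoint, `∑_{k∈ℤ} μ(f^{kN}(B')) < ∞` and
`∑_{n∈ℤ} μ(fⁿ(B')) < ∞`; consequently `f` satisfies Condition (SC). -/
theorem stmt_17 {X : Type*} [MeasurableSpace X] (μ : Measure X) (f : X → X) (c : ℝ≥0∞)
    (hsys : MeasSystem μ f c) (hdiss : Dissipative f)
    (p : ℝ≥0∞) [Fact (1 ≤ p)] (hp : p ≠ ⊤)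
    (T : Lp ℝ p μ →L[ℝ] Lp ℝ p μ)
    (hT : ∀ φ : Lp ℝ p μ, (T φ : X → ℝ) =ᵐ[μ] fun x => (φ : X → ℝ) (f x))
    (hdense : Dense {φ : Lp ℝ p μ | ∃ N : ℕ, 1 ≤ N ∧ (T ^ N) φ = φ}) :
    (∀ B : Set X, MeasurableSet B → μ B ≠ ⊤ → ∀ ε : ℝ≥0∞, 0 < ε →
      ∃ (B' : Set X) (N : ℕ), B' ⊆ B ∧ MeasurableSet B' ∧ 1 ≤ N ∧ μ (B \ B') < ε ∧
        (Pairwise fun k l : ℤ =>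
          Disjoint (zimg f (k * (N : ℤ)) B') (zimg f (l * (N : ℤ)) B')) ∧
        (∑' k : ℤ, μ (zimg f (k * (N : ℤ)) B')) ≠ ⊤ ∧
        (∑' n : ℤ, μ (zimg f n B')) ≠ ⊤) ∧
    SCcond μ f := by
  have main := fun B (hB : MeasurableSet B) hBfin ε (hε : 0 < ε) =>
    hsys.exists_subset_zimg_mul_pairwise_disjoint hdiss hp hT hdense hB hBfin hε
  refine ⟨main, fun ε hε B hB hBfin => ?_⟩
  obtain ⟨B', -, hB'B, hB'm, -, hdiff, -, -, hsum⟩ := main B hB hBfin.ne ε hε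
  exact ⟨B', hB'B, hB'm, hdiff, hsum⟩
end
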